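/- Let p > 3 be prime and write r = 2 + n(p-1)p^t with t ≥ 0 and n ≥ 0. Then for all i ≥ 3 with i ≤ t+3, Σ_{1<j≤r-1, j≡1 mod (p-1)} C(j,i)·C(r,j) ≡ 0 (mod p^{t+3-i}). -/

import Mathlib

/-!
Every term is divisible by `C(r, i)`, since `C(j, i) C(r, j) = C(r, i) C(r - i, j - i)`.
Because `p ∤ 6` and `p ^ t ∣ r - 2`, the identity `6 C(r, 3) = r (r - 1) (r - 2)` gives
`p ^ t ∣ C(r, 3)`, and `C(r, i) C(i, 3) = C(r, 3) C(r - 3, i - 3)` transfers this to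
`C(r, i)` at the cost of `v_p (C(i, 3)) ≤ log_p i ≤ i - 3`, the last step using `p ≥ 5`.
-/

namespace Nat

lemma choose_dvd_choose_mul_choose (r j i : ℕ) : r.choose i ∣ j.choose i * r.choose j := by
  rcases lt_or_ge j i with hji | hij
  · simp [choose_eq_zero_of_lt hji]
  · exact ⟨(r - i).choose (j - i), by rw [mul_comm, choose_mul hij]⟩

lemma dvd_choose_three_of_dvd_sub_two {m r : ℕ} (hm : m.Coprime 6) (h : m ∣ r - 2) :
    m ∣ r.choose 3 := by
  have hdesc : r.descFactorial 3 = 6 * r.choose 3 := descFactorial_eq_factorial_mul_choose r 3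
  have hsub : r - 2 ∣ r.descFactorial 3 := by
    simp only [descFactorial_succ, descFactorial_zero]
    exact dvd_mul_right _ _
  exact hm.dvd_of_dvd_mul_left (hdesc ▸ h.trans hsub)

lemma log_add_three_le {p i : ℕ} (hp : 5 ≤ p) (hi : 3 ≤ i) : log p i + 3 ≤ i := by
  set k := log p i
  rcases k.eq_zero_or_pos with hk | hk
  · omega
  have hpow : p ^ k ≤ i := pow_log_le_self p (by omega)
  have hmul : p * k ≤ p ^ k := mul_le_pow (by omega) k
  have h5 : 5 * k ≤ p * k := Nat.mul_le_mul_right k hp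
  omega

lemma pow_dvd_choose_of_pow_dvd_choose_three {p r t i : ℕ} (hp : p.Prime) (hp5 : 5 ≤ p)
    (ht : p ^ t ∣ r.choose 3) (hi : 3 ≤ i) : p ^ (t + 3 - i) ∣ r.choose i := by
  rcases lt_or_ge r i with hri | hir
  · simp [choose_eq_zero_of_lt hri]
  have hri0 : r.choose i ≠ 0 := (choose_pos hir).ne'
  have hi30 : i.choose 3 ≠ 0 := (choose_pos hi).ne'
  have hprod : p ^ t ∣ r.choose i * i.choose 3 := by
    rw [choose_mul hi]
    exact ht.mul_right _
  have hval : t ≤ (r.choose i).factorization p + (i.choose 3).factorization p := by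
    rw [← Finsupp.add_apply, ← factorization_mul hri0 hi30]
    exact (hp.pow_dvd_iff_le_factorization (mul_ne_zero hri0 hi30)).mp hprod
  have hval3 : (i.choose 3).factorization p + 3 ≤ i :=
    (Nat.add_le_add_right factorization_choose_le_log 3).trans (log_add_three_le hp5 hi)
  exact (hp.pow_dvd_iff_le_factorization hri0).mpr (by omega)

end Nat

theorem stmt_17 (p n t r : ℕ) (hp : p.Prime) (hp3 : 3 < p)
    (hr : r = 2 + n * (p - 1) * p^t) :
    ∀ i : ℕ, 3 ≤ i → i ≤ t + 3 →
      (p : ℤ)^(t + 3 - i) ∣ ∑ j ∈ (Finset.Ioc 1 (r - 1)).filter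
        (fun j => j % (p - 1) = 1 % (p - 1)), (j.choose i : ℤ) * (r.choose j : ℤ) := by
  intro i hi3 _
  have hcop : (p ^ t).Coprime (2 * 3) := by
    refine Nat.Coprime.pow_left t (Nat.Coprime.mul_right ?_ ?_)
    · exact (Nat.coprime_primes hp Nat.prime_two).mpr (by omega)
    · exact (Nat.coprime_primes hp Nat.prime_three).mpr (by omega)
  have hsub : p ^ t ∣ r - 2 := by
    rw [show r - 2 = n * (p - 1) * p ^ t by omega]
    exact dvd_mul_left _ _
  have hri : p ^ (t + 3 - i) ∣ r.choose i :=
    Nat.pow_dvd_choose_of_pow_dvd_choose_three hp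
      (hp.five_le_of_ne_two_of_ne_three (by omega) (by omega))
      (Nat.dvd_choose_three_of_dvd_sub_two hcop hsub) hi3
  refine Finset.dvd_sum fun j _ => ?_
  exact_mod_cast hri.trans (Nat.choose_dvd_choose_mul_choose r j i)
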